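/- arXiv:1407.5029 — 2 statements merged into one kernel-verified Lean document; each statement's English description precedes it below -/
import Mathlib

section
/- Under the hypotheses of the preceding quantitative LLC lemma (Ω a Jordan domain whose level sets γ_ε, 0 ≤ ε ≤ ε₀, are Jordan curves satisfying the 2-point condition with a common constant C, and φ ∈ F is L-Lipschitz on [ε₀/3,∞) with φ(t) > Mt on [0, diam ∂Ω]), there exists λ > 1 depending only on C, L, M, ε₀ and diam Ω such that any two points y₁, y₂ ∈ Σ(Ω,φ) can be joined by a curve σ ⊂ Σ(Ω,φ) with diam σ ≤ λ|y₁ − y₂| (that is, Σ(Ω,φ) is of bounded turning). -/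
open Metric Set MeasureTheory

noncomputable section

/-- The Euclidean plane. -/
abbrev E2 : Type := EuclideanSpace ℝ (Fin 2)
/-- Euclidean three-space. -/
abbrev E3 : Type := EuclideanSpace ℝ (Fin 3)

/-- Build a point of ℝ³ from a planar point and a height. -/
def mk3 (x : E2) (z : ℝ) : E3 := (WithLp.equiv 2 (Fin 3 → ℝ)).symm ![x 0, x 1, z]

/-- A Jordan curve: the image of the unit circle under a continuous injection
(equivalently, a topological embedding, by compactness of the circle). -/
def IsJordanCurve (Γ : Set E2) : Prop :=
  ∃ f : E2 → E2, ContinuousOn f (sphere 0 1) ∧ InjOn f (sphere 0 1) ∧ f '' (sphere 0 1) = Γ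

/-- A Jordan domain: a bounded domain whose boundary is a Jordan curve. -/
def IsJordanDomain (Ω : Set E2) : Prop :=
  IsOpen Ω ∧ IsConnected Ω ∧ Bornology.IsBounded Ω ∧ IsJordanCurve (frontier Ω)

/-- The ε-level set γ_ε = {x ∈ Ω : dist(x,∂Ω) = ε}, with the convention γ₀ = ∂Ω. -/
def levelSet (Ω : Set E2) (ε : ℝ) : Set E2 :=
  if ε = 0 then frontier Ω else {x ∈ Ω | infDist x (frontier Ω) = ε}

/-- The double-dome-like surface Σ(Ω,φ). -/
def domeSurface (Ω : Set E2) (φ : ℝ → ℝ) : Set E3 :=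
  {p | ∃ x ∈ closure Ω, p = mk3 x (φ (infDist x (frontier Ω))) ∨
                        p = mk3 x (-φ (infDist x (frontier Ω)))}

/-- The class 𝓕 of gauges: homeomorphisms φ of [0,∞) onto [0,∞) with φ(0)=0,
liminf_{t→0} φ(t)/t > 0, and φ Lipschitz on [r,∞) for every r > 0. -/
structure GaugeF (φ : ℝ → ℝ) : Prop where
  continuousOn : ContinuousOn φ (Ici 0)
  strictMonoOn : StrictMonoOn φ (Ici 0)
  surjOn : SurjOn φ (Ici 0) (Ici 0)
  map_zero : φ 0 = 0
  liminf_pos : ∃ m > (0:ℝ), ∀ᶠ t in nhdsWithin 0 (Ioi 0), m * t ≤ φ t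
  lipschitzOn : ∀ r > (0:ℝ), ∃ L : NNReal, LipschitzOnWith L φ (Ici r)

/-- A subarc of Γ with endpoints x and y: a subset of Γ that is a simple arc from x to y. -/
def IsSubarc (Γ A : Set E2) (x y : E2) : Prop :=
  A ⊆ Γ ∧ ∃ f : ℝ → E2, ContinuousOn f (Icc 0 1) ∧ InjOn f (Icc 0 1) ∧
    f 0 = x ∧ f 1 = y ∧ f '' (Icc 0 1) = A

/-- The 2-point condition with constant C: for any two points of Γ, some subarc joining
them (hence the one of smaller diameter) has diameter at most C·|x−y|. -/
def TwoPointCondition (Γ : Set E2) (C : ℝ) : Prop :=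
  ∀ x ∈ Γ, ∀ y ∈ Γ, x ≠ y →
    ∃ A, IsSubarc Γ A x y ∧ Metric.diam A ≤ C * dist x y

/-- A c-chord-arc curve: a rectifiable Jordan curve such that for any two points, the
shorter subarc joining them has length (1-dimensional Hausdorff measure) at most c·|x−y|. -/
def IsChordArc (Γ : Set E2) (c : ℝ) : Prop :=
  IsJordanCurve Γ ∧ μH[1] Γ < ⊤ ∧
  ∀ x ∈ Γ, ∀ y ∈ Γ, x ≠ y →
    ∃ A, IsSubarc Γ A x y ∧ μH[1] A ≤ ENNReal.ofReal (c * dist x y)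

/-- The λ-LLC₁ condition. -/
def LLC1With {X : Type*} [MetricSpace X] (S : Set X) (lam : ℝ) : Prop :=
  ∀ x ∈ S, ∀ r > (0:ℝ), ∀ y₁ ∈ ball x r ∩ S, ∀ y₂ ∈ ball x r ∩ S,
    ∃ E ⊆ ball x (lam * r) ∩ S, IsCompact E ∧ IsConnected E ∧ y₁ ∈ E ∧ y₂ ∈ E

/-- The λ-LLC₂ condition. -/
def LLC2With {X : Type*} [MetricSpace X] (S : Set X) (lam : ℝ) : Prop :=
  ∀ x ∈ S, ∀ r > (0:ℝ), ∀ y₁ ∈ S \ ball x r, ∀ y₂ ∈ S \ ball x r,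
    ∃ E ⊆ S \ ball x (r / lam), IsCompact E ∧ IsConnected E ∧ y₁ ∈ E ∧ y₂ ∈ E

/-- λ-linear local connectivity. -/
def LLCWith {X : Type*} [MetricSpace X] (S : Set X) (lam : ℝ) : Prop :=
  LLC1With S lam ∧ LLC2With S lam

/-- S (with the Euclidean metric of ℝ³) is quasisymmetric to the unit sphere S²:
there are a homeomorphism η of [0,∞) onto itself and an η-quasisymmetric
homeomorphism of S onto the unit sphere. -/
def QSEquivSphere (S : Set E3) : Prop :=
  ∃ η : ℝ → ℝ, (ContinuousOn η (Ici 0) ∧ StrictMonoOn η (Ici 0) ∧ SurjOn η (Ici 0) (Ici 0)) ∧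
  ∃ f : S → (sphere (0:E3) 1 : Set E3), Function.Bijective f ∧
    ∀ (x a b : S) (t : ℝ), 0 < t → dist (x:E3) a ≤ t * dist (x:E3) b →
      dist (f x : E3) (f a) ≤ η t * dist (f x : E3) (f b)

/-- The level chord-arc property. -/
def LevelChordArc (Ω : Set E2) : Prop :=
  ∃ ε₀ > (0:ℝ), ∃ c > (1:ℝ), ∀ ε, 0 ≤ ε → ε ≤ ε₀ → IsChordArc (levelSet Ω ε) c

/-- The level quasicircle property. -/
def LevelQuasicircle (Ω : Set E2) : Prop :=
  ∃ ε₀ > (0:ℝ), ∃ C > (1:ℝ), ∀ ε, 0 ≤ ε → ε ≤ ε₀ →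
    IsJordanCurve (levelSet Ω ε) ∧ TwoPointCondition (levelSet Ω ε) C

/-!
Write the points of `Σ(Ω, φ)` as `(x, ±φ(ρ x))` with `ρ = dist(·, ∂Ω)`, let `δ` be the distance
of the two points and `ρ x₁ ≤ ρ x₂`. Every curve below is the lift of a planar curve in `cl Ω`,
and its diameter is at most the planar diameter plus the oscillation of `φ ∘ ρ` along it.

Since `φ(t) > t`, if `φ(ρ x₁) ≤ δ` both points lie within `2δ` of `∂Ω`: lower them along
segments to nearest boundary points and join the feet by a subarc of `∂Ω` given by the 2-point
condition. Otherwise both points lie on the same sheet. If `ρ x₁ ≥ ε₀/3 + δ`, lift the segment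
`[x₁, x₂]`, along which `φ ∘ ρ` is `L`-Lipschitz. If not, lower both points to the level `γ_e`,
`e = min(ρ x₁, ε₀)`, which costs `O(δ)` because `φ` is `L`-Lipschitz above `ε₀/3`, and join them
inside `γ_e` by the 2-point condition. All pieces have diameter `O(δ)`, with `λ = 6 + 4C + 2L`.
-/

lemma dist_mk3_sq (a b : E2) (u v : ℝ) :
    dist (mk3 a u) (mk3 b v) ^ 2 = dist a b ^ 2 + (u - v) ^ 2 := by
  simp only [EuclideanSpace.dist_eq, Fin.sum_univ_three, Fin.sum_univ_two, Real.dist_eq, sq_abs]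
  rw [Real.sq_sqrt (by positivity), Real.sq_sqrt (by positivity)]
  simp [mk3]

lemma dist_mk3_le (a b : E2) (u v : ℝ) : dist (mk3 a u) (mk3 b v) ≤ dist a b + |u - v| := by
  nlinarith [dist_mk3_sq a b u v, sq_abs (u - v), abs_nonneg (u - v),
    dist_nonneg (x := a) (y := b), dist_nonneg (x := mk3 a u) (y := mk3 b v)]

lemma dist_le_dist_mk3 (a b : E2) (u v : ℝ) : dist a b ≤ dist (mk3 a u) (mk3 b v) := by
  nlinarith [dist_mk3_sq a b u v, sq_nonneg (u - v), dist_nonneg (x := a) (y := b),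
    dist_nonneg (x := mk3 a u) (y := mk3 b v)]

lemma abs_sub_le_dist_mk3 (a b : E2) (u v : ℝ) : |u - v| ≤ dist (mk3 a u) (mk3 b v) := by
  nlinarith [dist_mk3_sq a b u v, sq_abs (u - v), abs_nonneg (u - v), sq_nonneg (dist a b),
    dist_nonneg (x := mk3 a u) (y := mk3 b v)]

lemma continuous_mk3 : Continuous fun p : E2 × ℝ => mk3 p.1 p.2 := by
  refine (PiLp.continuous_toLp 2 _).comp (continuous_pi fun i => ?_)
  fin_cases i <;> fun_prop

lemma diam_image_mk3_le {K : Set E2} {g : E2 → ℝ} (hK : Bornology.IsBounded K)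
    (hg : Bornology.IsBounded (g '' K)) {s : ℝ} (hs : |s| ≤ 1) :
    diam ((fun x => mk3 x (s * g x)) '' K) ≤ diam K + diam (g '' K) := by
  refine diam_le_of_forall_dist_le (by positivity) ?_
  rintro _ ⟨x, hx, rfl⟩ _ ⟨y, hy, rfl⟩
  calc dist (mk3 x (s * g x)) (mk3 y (s * g y)) ≤ dist x y + |s| * |g x - g y| := by
        rw [← abs_mul, mul_sub]; exact dist_mk3_le _ _ _ _
    _ ≤ diam K + 1 * diam (g '' K) := by
        gcongr
        · exact dist_le_diam_of_mem hK hx hy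
        · rw [← Real.dist_eq]
          exact dist_le_diam_of_mem hg (mem_image_of_mem g hx) (mem_image_of_mem g hy)
    _ = diam K + diam (g '' K) := by rw [one_mul]

lemma eq_of_abs_mul_sub_mul_lt {s₁ s₂ a b : ℝ} (hs₁ : |s₁| = 1) (hs₂ : |s₂| = 1) (hb : 0 ≤ b)
    (h : |s₁ * a - s₂ * b| < a) : s₁ = s₂ := by
  rcases (abs_eq zero_le_one).1 hs₁ with rfl | rfl <;>
    rcases (abs_eq zero_le_one).1 hs₂ with rfl | rfl <;>
    first | rfl | (rw [abs_lt] at h; linarith)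

lemma IsPreconnected.subset_interior_of_disjoint_frontier {X : Type*} [TopologicalSpace X]
    {s t : Set X} (hs : IsPreconnected s) (hst : (s ∩ closure t).Nonempty)
    (hd : Disjoint s (frontier t)) : s ⊆ interior t := by
  have key : closure t ∩ s ⊆ interior t := fun y hy => by
    by_contra hyi
    exact disjoint_left.1 hd hy.2 ⟨hy.1, hyi⟩
  obtain ⟨y, hys, hyt⟩ := hst
  exact hs.subset_of_closure_inter_subset isOpen_interior ⟨y, hys, key ⟨hyt, hys⟩⟩
    fun z hz => key ⟨closure_mono interior_subset hz.1, hz.2⟩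

section DistanceToFrontier

variable {E : Type*} [NormedAddCommGroup E] [NormedSpace ℝ E] {s : Set E} {x : E}

lemma diam_segment (a b : E) : diam (segment ℝ a b) = dist a b := by
  rw [← convexHull_pair, convexHull_diam, diam_pair]

lemma isBounded_segment (a b : E) : Bornology.IsBounded (segment ℝ a b) := by
  rw [← convexHull_pair]
  exact isBounded_convexHull.2 (toFinite _).isBounded

lemma closedBall_infDist_frontier_subset_closure (hx : x ∈ closure s) :
    closedBall x (infDist x (frontier s)) ⊆ closure s := by
  rcases (infDist_nonneg (x := x) (s := frontier s)).eq_or_lt with h | h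
  · rw [← h, closedBall_zero]
    exact singleton_subset_iff.2 hx
  rw [← closure_ball x h.ne']
  refine closure_mono (interior_subset.trans' ?_)
  refine isPreconnected_ball.subset_interior_of_disjoint_frontier ⟨x, mem_ball_self h, hx⟩ ?_
  exact disjoint_left.2 fun y hy hyF => (mem_ball'.1 hy).not_ge (infDist_le_dist_of_mem hyF)

lemma infDist_frontier_le_diam (hb : Bornology.IsBounded s) (hx : x ∈ closure s) :
    infDist x (frontier s) ≤ diam (frontier s) := by
  rcases (frontier s).eq_empty_or_nonempty with hF | ⟨w, hw⟩
  · simp [hF]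
  have hFb : Bornology.IsBounded (frontier s) := hb.closure.subset frontier_subset_closure
  rcases eq_or_ne x w with rfl | hxw
  · exact (infDist_le_dist_of_mem hw).trans (by simp [diam_nonneg])
  have hxw' : 0 < dist w x := dist_pos.2 hxw.symm
  obtain ⟨R, hR⟩ := hb.subset_closedBall w
  set T := max 1 ((R + 1) / dist w x)
  -- the ray from `w` through `x` leaves the bounded set `s`, so it crosses its frontier
  have hout : AffineMap.lineMap w x T ∉ s := fun h => by
    have h1 := mem_closedBall.1 (hR h)
    rw [dist_lineMap_left, Real.norm_of_nonneg (by positivity)] at h1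
    have h2 : (R + 1) / dist w x * dist w x ≤ T * dist w x := by gcongr; exact le_max_right _ _
    rw [div_mul_cancel₀ _ hxw'.ne'] at h2
    linarith
  have hray : IsPreconnected (AffineMap.lineMap w x '' Icc 1 T) :=
    isPreconnected_Icc.image _ (AffineMap.lineMap_continuous).continuousOn
  obtain ⟨_, ⟨τ, hτ, rfl⟩, hzF⟩ : (AffineMap.lineMap w x '' Icc 1 T ∩ frontier s).Nonempty := by
    by_contra h
    rw [not_nonempty_iff_eq_empty, ← disjoint_iff_inter_eq_empty] at h
    refine hout (interior_subset (hray.subset_interior_of_disjoint_frontier ⟨x, ?_, hx⟩ h ?_))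
    · exact ⟨1, ⟨le_rfl, le_max_left _ _⟩, AffineMap.lineMap_apply_one _ _⟩
    · exact ⟨T, ⟨le_max_left _ _, le_rfl⟩, rfl⟩
  calc infDist x (frontier s) ≤ dist w x := dist_comm x w ▸ infDist_le_dist_of_mem hw
    _ ≤ τ * dist w x := le_mul_of_one_le_left dist_nonneg hτ.1
    _ = dist w (AffineMap.lineMap w x τ) := by
        rw [dist_left_lineMap, Real.norm_of_nonneg (by linarith [hτ.1])]
    _ ≤ diam (frontier s) := dist_le_diam_of_mem hFb hw hzF

lemma exists_dist_eq_and_infDist_eq [ProperSpace E] {K : Set E} (hK : IsClosed K)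
    (hKne : K.Nonempty) {e : ℝ} (he : 0 ≤ e) (hed : e ≤ infDist x K) :
    ∃ x', dist x x' = infDist x K - e ∧ infDist x' K = e := by
  obtain ⟨w, hwK, hw⟩ := hK.exists_infDist_eq_dist hKne x
  rcases (infDist_nonneg (x := x) (s := K)).eq_or_lt with hd | hd
  · exact ⟨x, by simp [le_antisymm (hd ▸ hed) he, ← hd], by linarith⟩
  set x' := AffineMap.lineMap x w ((infDist x K - e) / infDist x K)
  have hxx' : dist x x' = infDist x K - e := by
    rw [dist_left_lineMap, Real.norm_of_nonneg (by apply div_nonneg <;> linarith),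
      ← hw, div_mul_cancel₀ _ hd.ne']
  have hx'w : dist x' w = e := by
    rw [dist_lineMap_right, ← hw, one_sub_div hd.ne', sub_sub_cancel,
      Real.norm_of_nonneg (div_nonneg he hd.le), div_mul_cancel₀ _ hd.ne']
  refine ⟨x', hxx', le_antisymm (hx'w ▸ infDist_le_dist_of_mem hwK) ?_⟩
  linarith [infDist_le_infDist_add_dist (x := x) (y := x') (s := K)]

end DistanceToFrontier

lemma Path.diam_range_trans_le {X : Type*} [PseudoMetricSpace X] {a b c : X} (γ : Path a b)
    (γ' : Path b c) : diam (range (γ.trans γ')) ≤ diam (range γ) + diam (range γ') := by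
  rw [Path.trans_range]
  exact diam_union' ⟨b, ⟨1, γ.target⟩, ⟨0, γ'.source⟩⟩

def Path.ofContinuousOn {X : Type*} [TopologicalSpace X] {f : ℝ → X}
    (hf : ContinuousOn f (Icc 0 1)) : Path (f 0) (f 1) where
  toFun t := f t
  continuous_toFun := hf.comp_continuous continuous_subtype_val Subtype.prop
  source' := rfl
  target' := rfl

lemma Path.range_ofContinuousOn {X : Type*} [TopologicalSpace X] {f : ℝ → X}
    (hf : ContinuousOn f (Icc 0 1)) : range (Path.ofContinuousOn hf) = f '' Icc 0 1 := by
  rw [← Subtype.range_coe (s := Icc (0 : ℝ) 1), ← range_comp]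
  rfl

namespace GaugeF

variable {φ : ℝ → ℝ}

lemma monotoneOn (hφ : GaugeF φ) : MonotoneOn φ (Ici 0) := hφ.strictMonoOn.monotoneOn

lemma nonneg (hφ : GaugeF φ) {t : ℝ} (ht : 0 ≤ t) : 0 ≤ φ t :=
  hφ.map_zero ▸ hφ.monotoneOn self_mem_Ici ht ht

end GaugeF

section Dome

variable {Ω : Set E2} {φ : ℝ → ℝ} {C s s₁ s₂ : ℝ} {x x₁ x₂ : E2}

local notation "ρ" x:max => infDist x (frontier Ω)

lemma levelSet_subset (Ω : Set E2) (ε : ℝ) :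
    levelSet Ω ε ⊆ {x | x ∈ closure Ω ∧ infDist x (frontier Ω) = ε} := by
  intro x hx
  unfold levelSet at hx
  split_ifs at hx with hε
  · exact ⟨frontier_subset_closure hx, hε ▸ infDist_zero_of_mem hx⟩
  · exact ⟨subset_closure hx.1, hx.2⟩

lemma mem_levelSet_iff (hΩ : IsOpen Ω) (hFne : (frontier Ω).Nonempty) {ε : ℝ} :
    x ∈ levelSet Ω ε ↔ x ∈ closure Ω ∧ ρ x = ε := by
  refine ⟨fun hx => levelSet_subset Ω ε hx, fun ⟨hxc, hxε⟩ => ?_⟩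
  unfold levelSet
  split_ifs with hε
  · exact (isClosed_frontier.mem_iff_infDist_zero hFne).2 (hxε.trans hε)
  · refine ⟨?_, hxε⟩
    rw [closure_eq_interior_union_frontier, hΩ.interior_eq] at hxc
    exact hxc.resolve_right fun hxF => hε (hxε ▸ infDist_zero_of_mem hxF)

/-- The point of `Σ(Ω, φ)` above `x` on the upper (`s = 1`) or lower (`s = -1`) sheet. -/
def domePoint (Ω : Set E2) (φ : ℝ → ℝ) (s : ℝ) (x : E2) : E3 :=
  mk3 x (s * φ (infDist x (frontier Ω)))

lemma domePoint_mem_domeSurface (hx : x ∈ closure Ω) (hs : |s| = 1) :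
    domePoint Ω φ s x ∈ domeSurface Ω φ := by
  refine ⟨x, hx, ?_⟩
  rcases (abs_eq zero_le_one).1 hs with rfl | rfl
  · left; rw [domePoint, one_mul]
  · right; rw [domePoint, neg_one_mul]

lemma exists_domePoint_eq_of_mem {y : E3} (hy : y ∈ domeSurface Ω φ) :
    ∃ x ∈ closure Ω, ∃ s : ℝ, |s| = 1 ∧ domePoint Ω φ s x = y := by
  obtain ⟨x, hx, rfl | rfl⟩ := hy
  · exact ⟨x, hx, 1, abs_one, by rw [domePoint, one_mul]⟩
  · exact ⟨x, hx, -1, by rw [abs_neg, abs_one], by rw [domePoint, neg_one_mul]⟩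

lemma abs_sub_le_dist_domePoint (hφ : GaugeF φ) (hs₁ : |s₁| = 1) (hs₂ : |s₂| = 1) (x₁ x₂ : E2) :
    |φ (ρ x₁) - φ (ρ x₂)| ≤ dist (domePoint Ω φ s₁ x₁) (domePoint Ω φ s₂ x₂) := by
  have h := abs_abs_sub_abs_le_abs_sub (s₁ * φ (ρ x₁)) (s₂ * φ (ρ x₂))
  rw [abs_mul, abs_mul, hs₁, hs₂, one_mul, one_mul, abs_of_nonneg (hφ.nonneg infDist_nonneg),
    abs_of_nonneg (hφ.nonneg infDist_nonneg)] at h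
  exact h.trans (abs_sub_le_dist_mk3 _ _ _ _)

lemma exists_domePath_of_path (hφ : ContinuousOn φ (Ici 0)) (hs : |s| = 1) {a b : E2}
    (p : Path a b) (hp : range p ⊆ closure Ω) :
    ∃ γ : Path (domePoint Ω φ s a) (domePoint Ω φ s b), range γ ⊆ domeSurface Ω φ ∧
      diam (range γ) ≤ diam (range p) + diam ((fun x => φ (ρ x)) '' range p) := by
  have hh : Continuous fun x => φ (ρ x) :=
    hφ.comp_continuous (continuous_infDist_pt _) fun _ => infDist_nonneg
  have hlift : Continuous (domePoint Ω φ s) :=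
    continuous_mk3.comp (continuous_id.prodMk (continuous_const.mul hh))
  have hp_cpt : IsCompact (range p) := isCompact_range p.continuous
  refine ⟨p.map hlift, ?_, ?_⟩
  · rintro _ ⟨t, rfl⟩
    exact domePoint_mem_domeSurface (hp ⟨t, rfl⟩) hs
  · rw [Path.map_coe, range_comp]
    exact diam_image_mk3_le hp_cpt.isBounded (hp_cpt.image hh).isBounded hs.le

lemma exists_domePath_of_segment_subset (hφ : ContinuousOn φ (Ici 0)) (hs : |s| = 1) {a b : E2}
    (hab : segment ℝ a b ⊆ closure Ω) :
    ∃ γ : Path (domePoint Ω φ s a) (domePoint Ω φ s b), range γ ⊆ domeSurface Ω φ ∧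
      diam (range γ) ≤ dist a b + diam ((fun x => φ (ρ x)) '' segment ℝ a b) := by
  have h := exists_domePath_of_path hφ hs (Path.segment a b) (Path.range_segment a b ▸ hab)
  rwa [Path.range_segment, diam_segment] at h

/-- The descent runs along the segment from `x` towards a nearest point of `∂Ω`. -/
lemma exists_domePath_descent (hφ : GaugeF φ) (hFne : (frontier Ω).Nonempty) (hs : |s| = 1)
    {x : E2} (hx : x ∈ closure Ω) {e : ℝ} (he : 0 ≤ e) (hed : e ≤ ρ x) :
    ∃ x' ∈ closure Ω, ρ x' = e ∧ dist x x' = ρ x - e ∧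
      ∃ γ : Path (domePoint Ω φ s x) (domePoint Ω φ s x'), range γ ⊆ domeSurface Ω φ ∧
        diam (range γ) ≤ (ρ x - e) + (φ (ρ x) - φ e) := by
  set d := ρ x
  obtain ⟨x', hxx', hx'e⟩ := exists_dist_eq_and_infDist_eq isClosed_frontier hFne he hed
  have hseg : segment ℝ x x' ⊆ closure Ω :=
    (segment_subset_closedBall_left x x').trans
      ((closedBall_subset_closedBall (by linarith)).trans
        (closedBall_infDist_frontier_subset_closure hx))
  have hdepth : ∀ y ∈ segment ℝ x x', ρ y ∈ Icc e d := fun y hy => by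
    have hxy := mem_closedBall'.1 (segment_subset_closedBall_left x x' hy)
    have hyx' := mem_closedBall.1 (segment_subset_closedBall_right x x' hy)
    constructor
    · linarith [infDist_le_infDist_add_dist (x := x) (y := y) (s := frontier Ω)]
    · linarith [infDist_le_infDist_add_dist (x := y) (y := x') (s := frontier Ω)]
  have hheight : diam ((fun y => φ (ρ y)) '' segment ℝ x x') ≤ φ d - φ e := by
    have hed' : φ e ≤ φ d := hφ.monotoneOn he (he.trans hed) hed
    refine (diam_mono ?_ (isBounded_Icc _ _)).trans (Real.diam_Icc hed').le
    rintro _ ⟨y, hy, rfl⟩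
    obtain ⟨h1, h2⟩ := hdepth y hy
    exact ⟨hφ.monotoneOn he (he.trans h1) h1, hφ.monotoneOn (he.trans h1) (he.trans hed) h2⟩
  obtain ⟨γ, hγS, hγ⟩ := exists_domePath_of_segment_subset hφ.continuousOn hs hseg
  exact ⟨x', hseg (right_mem_segment ℝ x x'), hx'e, hxx', γ, hγS,
    hγ.trans (by rw [hxx']; linarith)⟩

lemma exists_domePath_of_lipschitzOnWith (hφ : ContinuousOn φ (Ici 0)) (hs : |s| = 1)
    {K : NNReal} {r : ℝ} (hK : LipschitzOnWith K φ (Ici r)) (hr : 0 ≤ r) {x₁ x₂ : E2}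
    (hx₁ : x₁ ∈ closure Ω) (hfar : r + dist x₁ x₂ ≤ ρ x₁) :
    ∃ γ : Path (domePoint Ω φ s x₁) (domePoint Ω φ s x₂), range γ ⊆ domeSurface Ω φ ∧
      diam (range γ) ≤ (1 + K) * dist x₁ x₂ := by
  have hseg : segment ℝ x₁ x₂ ⊆ closedBall x₁ (dist x₁ x₂) := segment_subset_closedBall_left x₁ x₂
  have hdeep : ∀ y ∈ segment ℝ x₁ x₂, ρ y ∈ Ici r := fun y hy => by
    have hxy := mem_closedBall'.1 (hseg hy)
    refine mem_Ici.2 ?_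
    linarith [infDist_le_infDist_add_dist (x := x₁) (y := y) (s := frontier Ω)]
  have hheight : diam ((fun y => φ (ρ y)) '' segment ℝ x₁ x₂) ≤ K * dist x₁ x₂ := by
    refine diam_le_of_forall_dist_le (by positivity) ?_
    rintro _ ⟨y, hy, rfl⟩ _ ⟨z, hz, rfl⟩
    calc dist (φ (ρ y)) (φ (ρ z)) ≤ K * dist (ρ y) (ρ z) :=
          hK.dist_le_mul _ (hdeep y hy) _ (hdeep z hz)
      _ ≤ K * dist x₁ x₂ := by
          gcongr
          refine (lipschitz_infDist_pt (frontier Ω)).dist_le_mul y z |>.trans ?_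
          rw [NNReal.coe_one, one_mul, ← diam_segment x₁ x₂]
          exact dist_le_diam_of_mem (isBounded_segment x₁ x₂) hy hz
  obtain ⟨γ, hγS, hγ⟩ := exists_domePath_of_segment_subset hφ hs
    (hseg.trans ((closedBall_subset_closedBall (by linarith)).trans
      (closedBall_infDist_frontier_subset_closure hx₁)))
  exact ⟨γ, hγS, hγ.trans (by linarith)⟩

lemma exists_domePath_of_twoPointCondition (hφ : ContinuousOn φ (Ici 0)) (hs : |s| = 1)
    {ε : ℝ} (h2 : TwoPointCondition (levelSet Ω ε) C) {a b : E2} (ha : a ∈ levelSet Ω ε)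
    (hb : b ∈ levelSet Ω ε) :
    ∃ γ : Path (domePoint Ω φ s a) (domePoint Ω φ s b), range γ ⊆ domeSurface Ω φ ∧
      diam (range γ) ≤ C * dist a b := by
  rcases eq_or_ne a b with rfl | hab
  · refine ⟨Path.refl _, ?_, by simp⟩
    rw [Path.refl_range, singleton_subset_iff]
    exact domePoint_mem_domeSurface (levelSet_subset Ω ε ha).1 hs
  obtain ⟨A, ⟨hAΓ, f, hf, -, rfl, rfl, rfl⟩, hdiam⟩ := h2 a ha b hb hab
  have hp := Path.range_ofContinuousOn hf
  obtain ⟨γ, hγS, hγ⟩ := exists_domePath_of_path hφ hs (Path.ofContinuousOn hf)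
    (hp ▸ fun y hy => (levelSet_subset Ω ε (hAΓ hy)).1)
  -- the lifted arc is horizontal, at height `s * φ ε`
  have hflat : diam ((fun y => φ (ρ y)) '' (f '' Icc 0 1)) = 0 := by
    refine diam_subsingleton (subsingleton_singleton (a := φ ε) |>.anti ?_)
    rintro _ ⟨y, hy, rfl⟩
    exact congrArg φ (levelSet_subset Ω ε (hAΓ hy)).2
  exact ⟨γ, hγS, hγ.trans (by rw [hp, hflat, add_zero]; exact hdiam)⟩

lemma exists_domePath_through_levelSet (hφ : GaugeF φ) (hΩ : IsOpen Ω)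
    (hFne : (frontier Ω).Nonempty) (hC : 0 ≤ C) {e : ℝ} (h2 : TwoPointCondition (levelSet Ω e) C)
    (hx₁ : x₁ ∈ closure Ω) (hx₂ : x₂ ∈ closure Ω) (hs₁ : |s₁| = 1) (hs₂ : |s₂| = 1)
    (he : 0 ≤ e) (he₁ : e ≤ ρ x₁) (he₂ : e ≤ ρ x₂) (hse : s₁ * φ e = s₂ * φ e) :
    ∃ γ : Path (domePoint Ω φ s₁ x₁) (domePoint Ω φ s₂ x₂), range γ ⊆ domeSurface Ω φ ∧
      diam (range γ) ≤ (ρ x₁ - e) + (φ (ρ x₁) - φ e) +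
        C * ((ρ x₁ - e) + dist x₁ x₂ + (ρ x₂ - e)) + ((ρ x₂ - e) + (φ (ρ x₂) - φ e)) := by
  obtain ⟨x₁', hx₁', hx₁'e, hx₁x₁', γ₁, hγ₁S, hγ₁⟩ :=
    exists_domePath_descent hφ hFne hs₁ hx₁ he he₁
  obtain ⟨x₂', hx₂', hx₂'e, hx₂x₂', γ₂, hγ₂S, hγ₂⟩ :=
    exists_domePath_descent hφ hFne hs₂ hx₂ he he₂
  obtain ⟨arc, harcS, harc⟩ := exists_domePath_of_twoPointCondition hφ.continuousOn hs₁ h2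
    ((mem_levelSet_iff hΩ hFne).2 ⟨hx₁', hx₁'e⟩) ((mem_levelSet_iff hΩ hFne).2 ⟨hx₂', hx₂'e⟩)
  have hfoot : domePoint Ω φ s₁ x₂' = domePoint Ω φ s₂ x₂' := by
    rw [domePoint, domePoint, hx₂'e, hse]
  refine ⟨γ₁.trans (arc.trans (γ₂.symm.cast hfoot rfl)), ?_, ?_⟩
  · rw [Path.trans_range, Path.trans_range, Path.cast_coe, Path.symm_range]
    exact union_subset hγ₁S (union_subset harcS hγ₂S)
  · have hfeet : dist x₁' x₂' ≤ (ρ x₁ - e) + dist x₁ x₂ + (ρ x₂ - e) := by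
      linarith [dist_triangle4 x₁' x₁ x₂ x₂', dist_comm x₁' x₁]
    have hpieces := (Path.diam_range_trans_le γ₁ _).trans
      (add_le_add_right (Path.diam_range_trans_le arc (γ₂.symm.cast hfoot rfl)) _)
    rw [Path.cast_coe, Path.symm_range] at hpieces
    linarith [mul_le_mul_of_nonneg_left hfeet hC]

lemma exists_domePath_of_height_le_dist (hφ : GaugeF φ) (hΩ : IsOpen Ω)
    (hFne : (frontier Ω).Nonempty) (hC : 0 ≤ C) (h2 : TwoPointCondition (levelSet Ω 0) C)
    (hφ_ge : ∀ x ∈ closure Ω, ρ x ≤ φ (ρ x))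
    (hx₁ : x₁ ∈ closure Ω) (hx₂ : x₂ ∈ closure Ω) (hs₁ : |s₁| = 1) (hs₂ : |s₂| = 1)
    (hlow : φ (ρ x₁) ≤ dist (domePoint Ω φ s₁ x₁) (domePoint Ω φ s₂ x₂)) :
    ∃ γ : Path (domePoint Ω φ s₁ x₁) (domePoint Ω φ s₂ x₂), range γ ⊆ domeSurface Ω φ ∧
      diam (range γ) ≤ (6 + 4 * C) * dist (domePoint Ω φ s₁ x₁) (domePoint Ω φ s₂ x₂) := by
  set δ := dist (domePoint Ω φ s₁ x₁) (domePoint Ω φ s₂ x₂)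
  have hplanar : dist x₁ x₂ ≤ δ := dist_le_dist_mk3 _ _ _ _
  have hheight := abs_le.1 (abs_sub_le_dist_domePoint (Ω := Ω) hφ hs₁ hs₂ x₁ x₂)
  have hρ₁ := hφ_ge x₁ hx₁
  have hρ₂ := hφ_ge x₂ hx₂
  obtain ⟨γ, hγS, hγ⟩ := exists_domePath_through_levelSet hφ hΩ hFne hC h2 hx₁ hx₂ hs₁ hs₂
    le_rfl infDist_nonneg infDist_nonneg (by rw [hφ.map_zero, mul_zero, mul_zero])
  refine ⟨γ, hγS, hγ.trans ?_⟩
  have hfeet : C * (ρ x₁ - 0 + dist x₁ x₂ + (ρ x₂ - 0)) ≤ C * (4 * δ) :=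
    mul_le_mul_of_nonneg_left (by linarith) hC
  rw [hφ.map_zero]
  linarith

lemma exists_domePath_same_sheet (hφ : GaugeF φ) (hΩ : IsOpen Ω)
    (hFne : (frontier Ω).Nonempty) (hC : 0 ≤ C) {ε₀ : ℝ} (hε₀ : 0 < ε₀)
    (h2 : ∀ ε, 0 ≤ ε → ε ≤ ε₀ → TwoPointCondition (levelSet Ω ε) C) {K : NNReal}
    (hK : LipschitzOnWith K φ (Ici (ε₀ / 3))) (hx₁ : x₁ ∈ closure Ω) (hx₂ : x₂ ∈ closure Ω)
    (hs : |s| = 1) (hord : ρ x₁ ≤ ρ x₂) :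
    ∃ γ : Path (domePoint Ω φ s x₁) (domePoint Ω φ s x₂), range γ ⊆ domeSurface Ω φ ∧
      diam (range γ) ≤ (4 + 4 * C + 2 * K) * dist (domePoint Ω φ s x₁) (domePoint Ω φ s x₂) := by
  set δ := dist (domePoint Ω φ s x₁) (domePoint Ω φ s x₂)
  have hplanar : dist x₁ x₂ ≤ δ := dist_le_dist_mk3 _ _ _ _
  have hheight := abs_le.1 (abs_sub_le_dist_domePoint (Ω := Ω) hφ hs hs x₁ x₂)
  have hdepth : ρ x₂ - ρ x₁ ≤ δ := by
    linarith [infDist_le_infDist_add_dist (x := x₂) (y := x₁) (s := frontier Ω), dist_comm x₁ x₂]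
  by_cases hfar : ε₀ / 3 + δ ≤ ρ x₁
  · obtain ⟨γ, hγS, hγ⟩ := exists_domePath_of_lipschitzOnWith (x₂ := x₂) hφ.continuousOn hs
      hK (by positivity) hx₁ (by linarith)
    refine ⟨γ, hγS, hγ.trans ?_⟩
    have hplanar' : (1 + K) * dist x₁ x₂ ≤ (1 + K) * δ := by gcongr
    nlinarith [K.2, dist_nonneg (x := x₁) (y := x₂)]
  set e := min (ρ x₁) ε₀
  have he : 0 ≤ e := le_min infDist_nonneg hε₀.le
  have he₁ : e ≤ ρ x₁ := min_le_left _ _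
  -- as `ρ x₁ < ε₀ / 3 + δ`, the descent to depth `e` is shorter than `δ` and, if `e = ε₀`,
  -- runs where `φ` is `K`-Lipschitz
  have hdrop : ρ x₁ - e ≤ δ ∧ φ (ρ x₁) - φ e ≤ K * δ := by
    rcases le_total (ρ x₁) ε₀ with h | h
    · simp only [e, min_eq_left h, sub_self]
      exact ⟨dist_nonneg, by positivity⟩
    · simp only [e, min_eq_right h]
      have hl := hK.dist_le_mul (ρ x₁) (mem_Ici.2 (by linarith)) ε₀ (mem_Ici.2 (by linarith))
      rw [Real.dist_eq, Real.dist_eq, abs_of_nonneg (sub_nonneg.2 h)] at hl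
      exact ⟨by linarith, (le_abs_self _).trans (hl.trans (by gcongr; linarith))⟩
  obtain ⟨γ, hγS, hγ⟩ := exists_domePath_through_levelSet hφ hΩ hFne hC
    (h2 e he (min_le_right _ _)) hx₁ hx₂ hs hs he he₁ (he₁.trans hord) rfl
  refine ⟨γ, hγS, hγ.trans ?_⟩
  have hfeet : C * (ρ x₁ - e + dist x₁ x₂ + (ρ x₂ - e)) ≤ C * (4 * δ) :=
    mul_le_mul_of_nonneg_left (by linarith) hC
  linarith

lemma exists_domePath (hφ : GaugeF φ) (hΩ : IsOpen Ω)
    (hFne : (frontier Ω).Nonempty) (hC : 0 ≤ C) {ε₀ : ℝ} (hε₀ : 0 < ε₀)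
    (h2 : ∀ ε, 0 ≤ ε → ε ≤ ε₀ → TwoPointCondition (levelSet Ω ε) C) {K : NNReal}
    (hK : LipschitzOnWith K φ (Ici (ε₀ / 3))) (hφ_ge : ∀ x ∈ closure Ω, ρ x ≤ φ (ρ x))
    (hx₁ : x₁ ∈ closure Ω) (hx₂ : x₂ ∈ closure Ω) (hs₁ : |s₁| = 1) (hs₂ : |s₂| = 1) :
    ∃ γ : Path (domePoint Ω φ s₁ x₁) (domePoint Ω φ s₂ x₂), range γ ⊆ domeSurface Ω φ ∧
      diam (range γ) ≤
        (6 + 4 * C + 2 * K) * dist (domePoint Ω φ s₁ x₁) (domePoint Ω φ s₂ x₂) := by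
  wlog hord : ρ x₁ ≤ ρ x₂ generalizing x₁ x₂ s₁ s₂
  · obtain ⟨γ, hγS, hγ⟩ := this hx₂ hx₁ hs₂ hs₁ (le_of_not_ge hord)
    exact ⟨γ.symm, by rwa [Path.symm_range], by rwa [Path.symm_range, dist_comm]⟩
  set δ := dist (domePoint Ω φ s₁ x₁) (domePoint Ω φ s₂ x₂)
  by_cases hlow : φ (ρ x₁) ≤ δ
  · obtain ⟨γ, hγS, hγ⟩ := exists_domePath_of_height_le_dist hφ hΩ hFne hC (h2 0 le_rfl hε₀.le)
      hφ_ge hx₁ hx₂ hs₁ hs₂ hlow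
    exact ⟨γ, hγS, hγ.trans (mul_le_mul_of_nonneg_right (by linarith [K.2]) dist_nonneg)⟩
  -- a vertical gap smaller than the height `φ (ρ x₁)` forces both points onto the same sheet
  obtain rfl : s₁ = s₂ := eq_of_abs_mul_sub_mul_lt hs₁ hs₂ (hφ.nonneg infDist_nonneg)
    ((abs_sub_le_dist_mk3 _ _ _ _).trans_lt (not_le.1 hlow))
  obtain ⟨γ, hγS, hγ⟩ := exists_domePath_same_sheet hφ hΩ hFne hC hε₀ h2 hK hx₁ hx₂ hs₁ hord
  exact ⟨γ, hγS, hγ.trans (mul_le_mul_of_nonneg_right (by linarith) dist_nonneg)⟩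

end Dome

/-- Bounded turning (Part I of the proof of Lemma 5.3): under the same hypotheses,
any two points of Σ(Ω,φ) can be joined inside Σ(Ω,φ) by a curve of diameter at most
λ·|y₁−y₂|, with λ > 1 depending only on C, L, M, ε₀ and diam Ω. -/
theorem stmt6 : ∃ Λ : ℝ → ℝ → ℝ → ℝ → ℝ → ℝ,
    ∀ (Ω : Set E2) (φ : ℝ → ℝ) (C L M ε₀ : ℝ),
      IsJordanDomain Ω → 1 < C → 0 < ε₀ →
      (∀ ε, 0 ≤ ε → ε ≤ ε₀ →
        IsJordanCurve (levelSet Ω ε) ∧ TwoPointCondition (levelSet Ω ε) C) →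
      GaugeF φ → LipschitzOnWith (Real.toNNReal L) φ (Ici (ε₀ / 3)) →
      1 < M → (∀ t, 0 < t → t ≤ Metric.diam (frontier Ω) → M * t < φ t) →
      1 < Λ C L M ε₀ (Metric.diam Ω) ∧
      ∀ y₁ ∈ domeSurface Ω φ, ∀ y₂ ∈ domeSurface Ω φ,
        ∃ σ : Set E3, σ ⊆ domeSurface Ω φ ∧ y₁ ∈ σ ∧ y₂ ∈ σ ∧
          (∃ g : ℝ → E3, ContinuousOn g (Icc 0 1) ∧ g 0 = y₁ ∧ g 1 = y₂ ∧
            g '' (Icc 0 1) = σ) ∧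
          Metric.diam σ ≤ Λ C L M ε₀ (Metric.diam Ω) * dist y₁ y₂ := by
  refine ⟨fun C L _ _ _ => 6 + 4 * C + 2 * (Real.toNNReal L : ℝ), ?_⟩
  rintro Ω φ C L M ε₀ ⟨hΩ, -, hb, f, -, -, hf⟩ hC hε₀ hlevel hφ hLip hM hMφ
  refine ⟨by dsimp only; linarith [(Real.toNNReal L).2], ?_⟩
  have hFne : (frontier Ω).Nonempty :=
    hf ▸ (NormedSpace.sphere_nonempty.2 zero_le_one).image f
  have hφ_ge : ∀ x ∈ closure Ω, infDist x (frontier Ω) ≤ φ (infDist x (frontier Ω)) := by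
    intro x hx
    rcases (infDist_nonneg (x := x) (s := frontier Ω)).eq_or_lt with h | h
    · rw [← h, hφ.map_zero]
    · nlinarith [hMφ _ h (infDist_frontier_le_diam hb hx)]
  intro y₁ hy₁ y₂ hy₂
  obtain ⟨x₁, hx₁, s₁, hs₁, rfl⟩ := exists_domePoint_eq_of_mem hy₁
  obtain ⟨x₂, hx₂, s₂, hs₂, rfl⟩ := exists_domePoint_eq_of_mem hy₂
  obtain ⟨γ, hγS, hγ⟩ := exists_domePath hφ hΩ hFne (by linarith) hε₀
    (fun ε h₀ h₁ => (hlevel ε h₀ h₁).2) hLip hφ_ge hx₁ hx₂ hs₁ hs₂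
  exact ⟨range γ, hγS, ⟨0, γ.source⟩, ⟨1, γ.target⟩, ⟨γ.extend, γ.continuous_extend.continuousOn,
    γ.extend_zero, γ.extend_one, γ.image_extend_of_subset subset_rfl⟩, hγ⟩
end
end

section
/- Let Γ ⊂ ℝ² be a Jordan curve satisfying the 2-point condition with constant C > 1 (a quasicircle). Then there exists λ > 1 depending only on C such that for any point x ∈ ℝ² (not necessarily on Γ), any r > 0, and any two points y₁, y₂ ∈ Γ∖cl(B(x,r)), there exists a subarc of Γ contained in Γ∖B(x,r/λ) that contains y₁ and y₂. -/
open Metric Set MeasureTheory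

noncomputable section

/-! Two distinct points `y₁, y₂` split `Γ` into two subarcs meeting only at `y₁, y₂`. If both
subarcs meet `B(x, r/λ)`, say at `p₁` and `p₂`, the arc joining `p₁` to `p₂` given by the two-point
condition is connected, so it passes through `y₁` or `y₂`; as its diameter is at most `2Cr/λ`, that
endpoint lies within `(2C+1)r/λ < r` of `x`. -/

theorem Path.isSubarc {Γ : Set E2} {a b : E2} (γ : Path a b) (hγ : Function.Injective γ)
    (hγΓ : range γ ⊆ Γ) : IsSubarc Γ (range γ) a b := by
  refine ⟨hγΓ, γ.extend, γ.continuous_extend.continuousOn, ?_, γ.extend_zero, γ.extend_one, ?_⟩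
  · intro s hs t ht hst
    rw [γ.extend_apply hs, γ.extend_apply ht] at hst
    exact congrArg Subtype.val (hγ hst)
  · ext p
    constructor
    · rintro ⟨t, ht, rfl⟩
      exact ⟨⟨t, ht⟩, (γ.extend_apply ht).symm⟩
    · rintro ⟨t, rfl⟩
      exact ⟨t, t.2, γ.extend_extends' t⟩

theorem IsSubarc.isCompact {Γ A : Set E2} {a b : E2} (h : IsSubarc Γ A a b) : IsCompact A := by
  obtain ⟨-, f, hf, -, -, -, rfl⟩ := h
  exact isCompact_Icc.image_of_continuousOn hf

theorem IsSubarc.isPreconnected {Γ A : Set E2} {a b : E2} (h : IsSubarc Γ A a b) :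
    IsPreconnected A := by
  obtain ⟨-, f, hf, -, -, -, rfl⟩ := h
  exact isPreconnected_Icc.image f hf

theorem IsSubarc.left_mem {Γ A : Set E2} {a b : E2} (h : IsSubarc Γ A a b) : a ∈ A := by
  obtain ⟨-, f, -, -, rfl, -, rfl⟩ := h
  exact ⟨0, left_mem_Icc.2 zero_le_one, rfl⟩

theorem IsSubarc.right_mem {Γ A : Set E2} {a b : E2} (h : IsSubarc Γ A a b) : b ∈ A := by
  obtain ⟨-, f, -, -, -, rfl, rfl⟩ := h
  exact ⟨1, right_mem_Icc.2 zero_le_one, rfl⟩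

theorem IsJordanCurve.exists_circle_param {Γ : Set E2} (hΓ : IsJordanCurve Γ) :
    ∃ φ : Circle → E2, Continuous φ ∧ Function.Injective φ ∧ range φ = Γ := by
  obtain ⟨f, hfc, hfi, rfl⟩ := hΓ
  let e := Complex.orthonormalBasisOneI.repr
  have he : ∀ z : Circle, e z ∈ sphere (0 : E2) 1 := fun z => by
    rw [mem_sphere_zero_iff_norm, LinearIsometryEquiv.norm_map, Circle.norm_coe]
  refine ⟨fun z => f (e z), ?_, ?_, ?_⟩
  · exact hfc.comp_continuous (e.continuous.comp continuous_subtype_val) he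
  · intro z w hzw
    exact Subtype.ext (e.injective (hfi (he z) (he w) hzw))
  · ext p
    constructor
    · rintro ⟨z, rfl⟩
      exact mem_image_of_mem f (he z)
    · rintro ⟨q, hq, rfl⟩
      have hq' : e.symm q ∈ sphere (0 : ℂ) 1 := by
        rwa [mem_sphere_zero_iff_norm, LinearIsometryEquiv.norm_map, ← mem_sphere_zero_iff_norm]
      exact ⟨⟨e.symm q, hq'⟩, congrArg f (e.apply_symm_apply q)⟩

theorem IsJordanCurve.exists_subarcs {Γ : Set E2} (hΓ : IsJordanCurve Γ) {y₁ y₂ : E2}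
    (hy₁ : y₁ ∈ Γ) (hy₂ : y₂ ∈ Γ) (hne : y₁ ≠ y₂) :
    ∃ A₁ A₂, IsSubarc Γ A₁ y₁ y₂ ∧ IsSubarc Γ A₂ y₁ y₂ ∧ A₁ ∪ A₂ = Γ ∧ A₁ ∩ A₂ = {y₁, y₂} := by
  obtain ⟨φ, hφc, hφi, rfl⟩ := hΓ.exists_circle_param
  obtain ⟨a, rfl⟩ := hy₁
  obtain ⟨b, rfl⟩ := hy₂
  have hab : a ≠ b := ne_of_apply_ne φ hne
  have arc : ∀ γ : Path a b, Function.Injective γ →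
      IsSubarc (range φ) (φ '' range γ) (φ a) (φ b) := fun γ hγ => by
    rw [← range_comp, ← Path.map_coe γ hφc]
    exact (γ.map hφc).isSubarc (hφi.comp hγ) (range_comp_subset_range γ φ)
  refine ⟨_, _, arc _ (Circle.path_injective_of_ne hab), arc (Circle.path b a).symm
    ((Circle.path_injective_of_ne hab.symm).comp unitInterval.symm_bijective.injective), ?_, ?_⟩
  · rw [Path.symm_range, ← image_union, Circle.range_path_union_range_path hab, image_univ]
  · rw [Path.symm_range, ← image_inter hφi, Circle.range_path_inter_range_path hab, image_pair]

theorem TwoPointCondition.exists_mem_inter_dist_le {Γ A₁ A₂ : Set E2} {C : ℝ}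
    (hTP : TwoPointCondition Γ C) (hA₁ : IsClosed A₁) (hA₂ : IsClosed A₂) (hΓ : A₁ ∪ A₂ = Γ)
    {p₁ p₂ : E2} (hp₁ : p₁ ∈ A₁) (hp₂ : p₂ ∈ A₂) :
    ∃ y ∈ A₁ ∩ A₂, dist y p₁ ≤ C * dist p₁ p₂ := by
  rcases eq_or_ne p₁ p₂ with rfl | hne
  · exact ⟨p₁, ⟨hp₁, hp₂⟩, by simp⟩
  obtain ⟨B, hB, hdiam⟩ := hTP p₁ (hΓ ▸ Or.inl hp₁) p₂ (hΓ ▸ Or.inr hp₂) hne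
  obtain ⟨y, hyB, hy⟩ := isPreconnected_closed_iff.1 hB.isPreconnected A₁ A₂ hA₁ hA₂
    (hΓ ▸ hB.1) ⟨p₁, hB.left_mem, hp₁⟩ ⟨p₂, hB.right_mem, hp₂⟩
  exact ⟨y, hy, (dist_le_diam_of_mem hB.isCompact.isBounded hyB hB.left_mem).trans hdiam⟩

/-- Remark 5.2 (strong LLC₂ for quasicircles): for a C-quasicircle Γ there is λ > 1,
depending only on C, such that any two points of Γ outside a closed disk can be joined
by a subarc of Γ avoiding the concentric disk of radius r/λ. -/
theorem stmt14 : ∀ C : ℝ, 1 < C → ∃ lam > (1:ℝ),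
    ∀ Γ : Set E2, IsJordanCurve Γ → TwoPointCondition Γ C →
      ∀ (x : E2) (r : ℝ), 0 < r →
        ∀ y₁ ∈ Γ \ closedBall x r, ∀ y₂ ∈ Γ \ closedBall x r, y₁ ≠ y₂ →
          ∃ A, IsSubarc Γ A y₁ y₂ ∧ A ⊆ Γ \ ball x (r / lam) := by
  intro C hC
  refine ⟨2 * C + 2, by linarith, ?_⟩
  intro Γ hJ hTP x r hr y₁ hy₁ y₂ hy₂ hne
  obtain ⟨A₁, A₂, h₁, h₂, hunion, hinter⟩ := hJ.exists_subarcs hy₁.1 hy₂.1 hne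
  by_contra! hmeet
  have hnear : ∀ A, IsSubarc Γ A y₁ y₂ → ∃ p ∈ A, dist p x < r / (2 * C + 2) := by
    intro A hA
    obtain ⟨p, hpA, hp⟩ := not_subset.1 (hmeet A hA)
    exact ⟨p, hpA, by simpa [hA.1 hpA] using hp⟩
  obtain ⟨p₁, hp₁, hp₁x⟩ := hnear A₁ h₁
  obtain ⟨p₂, hp₂, hp₂x⟩ := hnear A₂ h₂
  obtain ⟨y, hy, hyp⟩ := hTP.exists_mem_inter_dist_le h₁.isCompact.isClosed h₂.isCompact.isClosed
    hunion hp₁ hp₂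
  have hyx : dist y x ≤ r := calc
    dist y x ≤ dist y p₁ + dist p₁ x := dist_triangle _ _ _
    _ ≤ C * (dist p₁ x + dist x p₂) + dist p₁ x := by
        gcongr
        exact hyp.trans (mul_le_mul_of_nonneg_left (dist_triangle p₁ x p₂) (by linarith))
    _ ≤ C * (r / (2 * C + 2) + r / (2 * C + 2)) + r / (2 * C + 2) := by
        rw [dist_comm x]; gcongr
    _ ≤ r := by field_simp; nlinarith
  rw [hinter] at hy
  rcases hy with rfl | rfl
  exacts [hy₁.2 (mem_closedBall.2 hyx), hy₂.2 (mem_closedBall.2 hyx)]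
end
end
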